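/- For z ∈ ℍ and s, s' ∈ ℂ with Re(s) > 1/2 and Re(s') > 1/2, the series K(z;s,s') := (1/2) Σ_{γ ∈ SL(2,ℤ)} Im(γz)^{s+s'} / |γz|^{2s} converges absolutely, and K(z;s,s') = K(z;s',s). -/

import Mathlib

noncomputable section

open Complex Filter MeasureTheory

abbrev SL2Z := Matrix.SpecialLinearGroup (Fin 2) ℤ
abbrev SL2R := Matrix.SpecialLinearGroup (Fin 2) ℝ

/-- `j(γ,z) = cz+d` for `γ ∈ SL(2,ℤ)`. -/
def jZ (γ : SL2Z) (z : ℂ) : ℂ := ((γ 1 0 : ℤ) : ℂ) * z + ((γ 1 1 : ℤ) : ℂ)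

/-- The Möbius action `γz = (az+b)/(cz+d)` for `γ ∈ SL(2,ℤ)`. -/
def actZ (γ : SL2Z) (z : ℂ) : ℂ := (((γ 0 0 : ℤ) : ℂ) * z + ((γ 0 1 : ℤ) : ℂ)) / jZ γ z

/-- `j(γ,z) = cz+d` for `γ ∈ SL(2,ℝ)`. -/
def jR (γ : SL2R) (z : ℂ) : ℂ := ((γ 1 0 : ℝ) : ℂ) * z + ((γ 1 1 : ℝ) : ℂ)

/-- The Möbius action for `γ ∈ SL(2,ℝ)`. -/
def actR (γ : SL2R) (z : ℂ) : ℂ := (((γ 0 0 : ℝ) : ℂ) * z + ((γ 0 1 : ℝ) : ℂ)) / jR γ z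

/-- Coprime pairs `(c,d)`, parametrizing the cosets `B\Γ` via the bottom row. -/
def CP : Type := {p : ℤ × ℤ // IsCoprime p.1 p.2}

/-- Coprime pairs with normalized sign, parametrizing `Γ∞\Γ` via the bottom row. -/
def CP1 : Type := {p : ℤ × ℤ // IsCoprime p.1 p.2 ∧ (0 < p.1 ∨ (p.1 = 0 ∧ 0 < p.2))}

/-- `j(γ,z) = cz+d` in terms of the bottom row. -/
def jP (p : ℤ × ℤ) (z : ℂ) : ℂ := (p.1 : ℂ) * z + (p.2 : ℂ)

/-- `c_{γδ⁻¹} = c_γ d_δ − d_γ c_δ` in terms of the bottom rows of `γ, δ`. -/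
def crossP (p q : ℤ × ℤ) : ℤ := p.1 * q.2 - p.2 * q.1

/-- `Im(γz) = Im z / |cz+d|²` in terms of the bottom row of `γ`. -/
def imP (p : ℤ × ℤ) (z : ℂ) : ℝ := z.im / Complex.normSq (jP p z)

/-- A representative Möbius action for a coset with bottom row the coprime pair `(c,d)`:
choosing `a, b` with `ad−bc = 1`, return `(az+b)/(cz+d)`. -/
def mobiusP (p : ℤ × ℤ) (h : IsCoprime p.1 p.2) (z : ℂ) : ℂ :=
  ((h.choose_spec.choose : ℂ) * z - (h.choose : ℂ)) / jP p z

def mobiusCP (p : CP) (z : ℂ) : ℂ := mobiusP p.1 p.2 z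
def mobiusCP1 (p : CP1) (z : ℂ) : ℂ := mobiusP p.1 p.2.1 z

/-- The term of the double Eisenstein series `E_{s,k-s}(z,w)`. -/
def dblEisTerm (k : ℤ) (s w : ℂ) (z : ℂ) (pq : CP × CP) : ℂ :=
  if 0 < crossP pq.1.1 pq.2.1 then
    ((crossP pq.1.1 pq.2.1 : ℤ) : ℂ) ^ (w - 1) * (jP pq.1.1 z / jP pq.2.1 z) ^ (-s) *
      (jP pq.2.1 z) ^ (-k)
  else 0

/-- The double Eisenstein series `E_{s,k-s}(z,w)`. -/
def dblEis (k : ℤ) (s w : ℂ) (z : ℂ) : ℂ := ∑' pq : CP × CP, dblEisTerm k s w z pq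

/-- The completing factor for `E*_{s,k-s}(z,w)`. -/
def eisFactor (k : ℤ) (s w : ℂ) : ℂ :=
  Complex.exp (s * Real.pi * I / 2) * Complex.Gamma s * Complex.Gamma ((k : ℂ) - s) *
      Complex.Gamma ((k : ℂ) - w) * riemannZeta (1 - w + s) * riemannZeta (1 - w + (k : ℂ) - s) /
    ((2 : ℂ) ^ ((3 : ℂ) - w) * (Real.pi : ℂ) ^ ((k : ℂ) + 1 - w) * Complex.Gamma ((k : ℂ) - 1))

/-- The completed double Eisenstein series `E*_{s,k-s}(z,w)`. -/
def dblEisStar (k : ℤ) (s w : ℂ) (z : ℂ) : ℂ := eisFactor k s w * dblEis k s w z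

/-- The weight-`k` Hecke operator `T_n`. -/
def hecke (k : ℤ) (n : ℕ) (f : ℂ → ℂ) (z : ℂ) : ℂ :=
  (n : ℂ) ^ (k - 1) * ∑ p ∈ n.divisorsAntidiagonal,
    ((p.2 : ℕ) : ℂ) ^ (-k) * ∑ b ∈ Finset.range p.2, f (((p.1 : ℂ) * z + (b : ℂ)) / (p.2 : ℂ))

/-- The completed `L`-function `L*(f,s) = ∫_0^∞ f(iy) y^{s-1} dy`. -/
def Lstar (f : ℂ → ℂ) (s : ℂ) : ℂ := ∫ y in Set.Ioi (0 : ℝ), f ((y : ℂ) * I) * (y : ℂ) ^ (s - 1)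

/-- The twisted completed `L`-function `L*(f,s;x) = ∫_0^∞ f(iy+x) y^{s-1} dy`. -/
def LstarT (f : ℂ → ℂ) (s : ℂ) (x : ℚ) : ℂ :=
  ∫ y in Set.Ioi (0 : ℝ), f ((x : ℂ) + (y : ℂ) * I) * (y : ℂ) ^ (s - 1)

/-- The standard fundamental domain for `SL(2,ℤ)\ℍ`, as a subset of `ℝ²`. -/
def fundDom : Set (ℝ × ℝ) := {p | 0 < p.2 ∧ |p.1| ≤ 1 / 2 ∧ 1 ≤ p.1 ^ 2 + p.2 ^ 2}

/-- The Petersson inner product `⟨g,f⟩ = ∫_F g(z) conj(f(z)) y^k dx dy / y²`. -/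
def petersson (k : ℤ) (g f : ℂ → ℂ) : ℂ :=
  ∫ p in fundDom, g ((p.1 : ℂ) + (p.2 : ℂ) * I) * (starRingEnd ℂ) (f ((p.1 : ℂ) + (p.2 : ℂ) * I)) *
    ((p.2 : ℂ)) ^ (k - 2)

/-- `f` is a normalized Hecke eigenform of weight `k` for `SL(2,ℤ)`, with Fourier
coefficients `a`. -/
structure IsHeckeEigenform (k : ℤ) (f : ℂ → ℂ) (a : ℕ → ℂ) : Prop where
  holo : DifferentiableOn ℂ f {z : ℂ | 0 < z.im}
  transform : ∀ γ : SL2Z, ∀ z : ℂ, 0 < z.im → f (actZ γ z) = jZ γ z ^ k * f z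
  expansion : ∀ z : ℂ, 0 < z.im →
    HasSum (fun n : ℕ => a n * Complex.exp (2 * Real.pi * I * (n : ℂ) * z)) (f z)
  cusp : a 0 = 0
  normalized : a 1 = 1
  eigen : ∀ n : ℕ, 0 < n → ∃ lam : ℂ, ∀ z : ℂ, 0 < z.im → hecke k n f z = lam * f z

/-- The generalized Cohen kernel `C_k(z,s;x)`. -/
def cohen (k : ℤ) (s : ℂ) (x : ℚ) (z : ℂ) : ℂ :=
  (1 / 2) * ∑' γ : SL2Z, (actZ γ z + (x : ℂ)) ^ (-s) * (jZ γ z) ^ (-k)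

/-- The Poincaré series `P_k(z;m)` (over `Γ∞\Γ`). -/
def poincare (k : ℤ) (m : ℕ) (z : ℂ) : ℂ :=
  ∑' p : CP1, Complex.exp (2 * Real.pi * I * (m : ℂ) * mobiusCP1 p z) * (jP p.1 z) ^ (-k)

/-- The series `Q_k(z,l;m)`. -/
def Qser (k : ℤ) (l m : ℕ) (z : ℂ) : ℂ :=
  if l = 0 then poincare k m z
  else (1 / 2) * ∑' p : CP, Complex.exp (2 * Real.pi * I * (m : ℂ) * mobiusCP p z) *
    ((p.1.1 : ℂ)) ^ l * (jP p.1 z) ^ (-(k + (l : ℤ)))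

/-- The Rankin–Cohen bracket `[g₁,g₂]_n` of weights `k₁, k₂`. -/
def RC (k₁ k₂ n : ℕ) (g₁ g₂ : ℂ → ℂ) (z : ℂ) : ℂ :=
  ∑ r ∈ Finset.range (n + 1), (-1 : ℂ) ^ r * (Nat.choose (k₁ + n - 1) (n - r) : ℂ) *
    (Nat.choose (k₂ + n - 1) r : ℂ) * iteratedDeriv r g₁ z * iteratedDeriv (n - r) g₂ z

/-- The coefficient `A_{k₁,k₂}(l,u)_n`. -/
def Acoef (k₁ k₂ l u n : ℕ) : ℂ :=
  ((Nat.factorial (k₁ + n - 1) * Nat.factorial (k₂ + n - 1) : ℕ) : ℂ) /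
    ((Nat.factorial l * Nat.factorial u * Nat.factorial (n - l - u) *
      Nat.factorial (k₁ + l - 1) * Nat.factorial (k₂ + u - 1) : ℕ) : ℂ)

/-- The term of the double Poincaré series. -/
def dblPoinTerm (k₁ k₂ : ℤ) (w : ℂ) (m₁ m₂ : ℕ) (z : ℂ) (pq : CP × CP) : ℂ :=
  if 0 < crossP pq.1.1 pq.2.1 then
    ((crossP pq.1.1 pq.2.1 : ℤ) : ℂ) ^ (w - 1) *
      Complex.exp (2 * Real.pi * I * ((m₁ : ℂ) * mobiusCP pq.1 z + (m₂ : ℂ) * mobiusCP pq.2 z)) *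
      (jP pq.1.1 z) ^ (-k₁) * (jP pq.2.1 z) ^ (-k₂)
  else 0

/-- The double Poincaré series `P_{k₁,k₂}(z,w;m₁,m₂)`. -/
def dblPoin (k₁ k₂ : ℤ) (w : ℂ) (m₁ m₂ : ℕ) (z : ℂ) : ℂ :=
  ∑' pq : CP × CP, dblPoinTerm k₁ k₂ w m₁ m₂ z pq

/-- The double Eisenstein series `E_{k₁,k₂}(z,w)` with two integral weights. -/
def dblEis2 (k₁ k₂ : ℤ) (w : ℂ) (z : ℂ) : ℂ :=
  ∑' pq : CP × CP, if 0 < crossP pq.1.1 pq.2.1 then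
    ((crossP pq.1.1 pq.2.1 : ℤ) : ℂ) ^ (w - 1) * (jP pq.1.1 z) ^ (-k₁) * (jP pq.2.1 z) ^ (-k₂)
  else 0

/-- `f` transforms with weight `k` under `SL(2,ℤ)`. -/
def IsWeaklyModular (k : ℤ) (f : ℂ → ℂ) : Prop :=
  ∀ γ : SL2Z, ∀ z : ℂ, 0 < z.im → f (actZ γ z) = jZ γ z ^ k * f z

/-- `f` is a holomorphic modular form of weight `k` for `SL(2,ℤ)`. -/
def IsModularForm (k : ℤ) (f : ℂ → ℂ) : Prop :=
  DifferentiableOn ℂ f {z : ℂ | 0 < z.im} ∧ IsWeaklyModular k f ∧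
    ∃ C A : ℝ, ∀ z : ℂ, A ≤ z.im → ‖f z‖ ≤ C

/-- `f` is a holomorphic cusp form of weight `k` for `SL(2,ℤ)`. -/
def IsCuspForm (k : ℤ) (f : ℂ → ℂ) : Prop :=
  DifferentiableOn ℂ f {z : ℂ | 0 < z.im} ∧ IsWeaklyModular k f ∧
    Tendsto f (comap Complex.im atTop) (nhds 0)

/-- The term of the non-holomorphic kernel `K(z;s,s')`. -/
def KkerTerm (z s s' : ℂ) (γ : SL2Z) : ℂ :=
  (((actZ γ z).im : ℝ) : ℂ) ^ (s + s') / ((‖actZ γ z‖ : ℝ) : ℂ) ^ (2 * s)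

/-- The non-holomorphic kernel `K(z;s,s') = (1/2) Σ_{γ ∈ SL(2,ℤ)} Im(γz)^{s+s'}/|γz|^{2s}`. -/
def Kker (z s s' : ℂ) : ℂ := (1 / 2) * ∑' γ : SL2Z, KkerTerm z s s' γ

/-- The term of the non-holomorphic double Eisenstein series `ℰ(z,w;s,s')`. -/
def nhTerm (w s s' : ℂ) (z : ℂ) (pq : CP1 × CP1) : ℂ :=
  if crossP pq.1.1 pq.2.1 ≠ 0 then
    ((imP pq.1.1 z : ℝ) : ℂ) ^ s * ((imP pq.2.1 z : ℝ) : ℂ) ^ s' *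
      ((|crossP pq.1.1 pq.2.1| : ℤ) : ℂ) ^ (-w)
  else 0

/-- The non-holomorphic double Eisenstein series `ℰ(z,w;s,s')`. -/
def nhE (z : ℂ) (w s s' : ℂ) : ℂ := ∑' pq : CP1 × CP1, nhTerm w s s' z pq

/-- `g` is a cusp form of weight `k` with Fourier coefficients `b`. -/
structure IsCuspFormWithCoeffs (k : ℤ) (g : ℂ → ℂ) (b : ℕ → ℂ) : Prop where
  holo : DifferentiableOn ℂ g {z : ℂ | 0 < z.im}
  transform : ∀ γ : SL2Z, ∀ z : ℂ, 0 < z.im → g (actZ γ z) = jZ γ z ^ k * g z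
  expansion : ∀ z : ℂ, 0 < z.im →
    HasSum (fun n : ℕ => b n * Complex.exp (2 * Real.pi * I * (n : ℂ) * z)) (g z)
  czero : b 0 = 0

/-- The term of the quadruple-sum form of the double Eisenstein series:
`(ad−bc)^{w−1} ((az+b)/(cz+d))^{−s} (cz+d)^{−k}` for `ad−bc > 0`. -/
def quadTerm (k : ℤ) (s w : ℂ) (z : ℂ) (v : ℤ × ℤ × ℤ × ℤ) : ℂ :=
  if 0 < v.1 * v.2.2.2 - v.2.1 * v.2.2.1 then
    ((v.1 * v.2.2.2 - v.2.1 * v.2.2.1 : ℤ) : ℂ) ^ (w - 1) *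
      (((v.1 : ℂ) * z + (v.2.1 : ℂ)) / ((v.2.2.1 : ℂ) * z + (v.2.2.2 : ℂ))) ^ (-s) *
      ((v.2.2.1 : ℂ) * z + (v.2.2.2 : ℂ)) ^ (-k)
  else 0

/-- The twisted version: `(ad−bc)^{w−1} ((az+b)/(cz+d) + x)^{−s} (cz+d)^{−k}` for `ad−bc > 0`. -/
def quadTermT (k : ℤ) (s w : ℂ) (x : ℚ) (z : ℂ) (v : ℤ × ℤ × ℤ × ℤ) : ℂ :=
  if 0 < v.1 * v.2.2.2 - v.2.1 * v.2.2.1 then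
    ((v.1 * v.2.2.2 - v.2.1 * v.2.2.1 : ℤ) : ℂ) ^ (w - 1) *
      (((v.1 : ℂ) * z + (v.2.1 : ℂ)) / ((v.2.2.1 : ℂ) * z + (v.2.2.2 : ℂ)) + (x : ℂ)) ^ (-s) *
      ((v.2.2.1 : ℂ) * z + (v.2.2.2 : ℂ)) ^ (-k)
  else 0

/-!
Write `γz = (az + b)/(cz + d)` and `σ = Re s`, `σ' = Re s'`. The term of `K(z;s,s')` has absolute
value `(Im z)^(σ+σ') |cz + d|^(-2σ') |az + b|^(-2σ)`. Left multiplication by `S` sends `γz` to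
`-1/γz`, which exchanges `s` and `s'` in the term; this gives the symmetry, and, since `S` swaps
`az + b` and `cz + d` up to sign, it reduces convergence to the part of the sum where
`|cz + d| ≤ |az + b|`. There write `γ = T^n γ₀` with `γ₀` depending only on the coprime bottom row
`(c, d)`, so that `az + b = a₀z + b₀ + n(cz + d)`: the sum over `n` is
`O(|cz + d|^(-2σ))` uniformly in `(c, d)`, leaving the Eisenstein series
`∑ |cz + d|^(-2(σ+σ'))`, which converges because `σ + σ' > 1`.
-/

open ModularGroup

def numZ (γ : SL2Z) (z : ℂ) : ℂ := ((γ 0 0 : ℤ) : ℂ) * z + ((γ 0 1 : ℤ) : ℂ)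

section MobiusAction

variable {z : ℂ}

lemma actZ_eq_numZ_div_jZ (γ : SL2Z) (z : ℂ) : actZ γ z = numZ γ z / jZ γ z := rfl

lemma im_numZ_mul_conj_jZ (γ : SL2Z) (z : ℂ) :
    (numZ γ z * (starRingEnd ℂ) (jZ γ z)).im = z.im := by
  have hdet : ((γ 0 0 : ℤ) : ℝ) * γ 1 1 - γ 0 1 * γ 1 0 = 1 := by
    have := γ.det_coe
    rw [Matrix.det_fin_two] at this
    exact_mod_cast this
  simp only [numZ, jZ, Complex.mul_im, Complex.add_re, Complex.add_im, Complex.conj_re,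
    Complex.conj_im, Complex.mul_re, Complex.intCast_re, Complex.intCast_im]
  linear_combination z.im * hdet

lemma numZ_ne_zero (hz : 0 < z.im) (γ : SL2Z) : numZ γ z ≠ 0 := by
  intro h
  have := im_numZ_mul_conj_jZ γ z
  rw [h, zero_mul, Complex.zero_im] at this
  exact hz.ne this

lemma jZ_ne_zero (hz : 0 < z.im) (γ : SL2Z) : jZ γ z ≠ 0 := by
  intro h
  have := im_numZ_mul_conj_jZ γ z
  rw [h, map_zero, mul_zero, Complex.zero_im] at this
  exact hz.ne this

lemma im_actZ (γ : SL2Z) (z : ℂ) : (actZ γ z).im = z.im / Complex.normSq (jZ γ z) := by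
  rw [actZ_eq_numZ_div_jZ, div_eq_mul_inv, Complex.inv_def, ← mul_assoc, Complex.im_mul_ofReal,
    im_numZ_mul_conj_jZ, div_eq_mul_inv]

lemma im_actZ_pos (hz : 0 < z.im) (γ : SL2Z) : 0 < (actZ γ z).im := by
  rw [im_actZ]
  exact div_pos hz (Complex.normSq_pos.2 (jZ_ne_zero hz γ))

lemma actZ_ne_zero (hz : 0 < z.im) (γ : SL2Z) : actZ γ z ≠ 0 :=
  div_ne_zero (numZ_ne_zero hz γ) (jZ_ne_zero hz γ)

lemma T_zpow_mul_apply_zero (n : ℤ) (g : SL2Z) : (T ^ n * g) 0 = g 0 + n • g 1 := by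
  ext j
  simp [coe_T_zpow, Matrix.vecMul, dotProduct, Fin.sum_univ_succ]

lemma S_mul_apply_zero (g : SL2Z) : (S * g) 0 = -g 1 := by
  ext j
  simp [Matrix.vecMul, dotProduct, Fin.sum_univ_succ]

lemma S_mul_apply_one (g : SL2Z) : (S * g) 1 = g 0 := by
  ext j
  simp [Matrix.vecMul, dotProduct, Fin.sum_univ_succ]

lemma jZ_T_zpow_mul (n : ℤ) (γ : SL2Z) (z : ℂ) : jZ (T ^ n * γ) z = jZ γ z := by
  simp only [jZ, T_pow_mul_apply_one]

lemma numZ_T_zpow_mul (n : ℤ) (γ : SL2Z) (z : ℂ) :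
    numZ (T ^ n * γ) z = numZ γ z + n * jZ γ z := by
  simp only [numZ, jZ, T_zpow_mul_apply_zero, Pi.add_apply, Pi.smul_apply, smul_eq_mul]
  push_cast
  ring

lemma jZ_S_mul (γ : SL2Z) (z : ℂ) : jZ (S * γ) z = numZ γ z := by
  simp only [jZ, numZ, S_mul_apply_one]

lemma numZ_S_mul (γ : SL2Z) (z : ℂ) : numZ (S * γ) z = -jZ γ z := by
  simp only [numZ, jZ, S_mul_apply_zero, Pi.neg_apply]
  push_cast
  ring

lemma actZ_S_mul (γ : SL2Z) (z : ℂ) : actZ (S * γ) z = -(actZ γ z)⁻¹ := by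
  rw [actZ_eq_numZ_div_jZ, actZ_eq_numZ_div_jZ, jZ_S_mul, numZ_S_mul, inv_div, neg_div]

end MobiusAction

section KernelTerm

variable {z : ℂ}

lemma ofReal_cpow_eq_exp {x : ℝ} (hx : 0 < x) (u : ℂ) :
    (x : ℂ) ^ u = Complex.exp (Real.log x * u) := by
  rw [Complex.cpow_def_of_ne_zero (Complex.ofReal_ne_zero.2 hx.ne'), Complex.ofReal_log hx.le]

lemma KkerTerm_eq_exp (hz : 0 < z.im) (s s' : ℂ) (γ : SL2Z) :
    KkerTerm z s s' γ = Complex.exp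
      (Real.log (actZ γ z).im * (s + s') - Real.log ‖actZ γ z‖ * (2 * s)) := by
  rw [KkerTerm, ofReal_cpow_eq_exp (im_actZ_pos hz γ),
    ofReal_cpow_eq_exp (norm_pos_iff.2 (actZ_ne_zero hz γ)), Complex.exp_sub]

/-- The inversion `w ↦ -1/w` divides `Im w` by `|w|²` and inverts `|w|`, which exchanges the
roles of `s` and `s'`. -/
lemma KkerTerm_S_mul (hz : 0 < z.im) (s s' : ℂ) (γ : SL2Z) :
    KkerTerm z s s' (S * γ) = KkerTerm z s' s γ := by
  have hw := actZ_ne_zero hz γ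
  have him : (actZ (S * γ) z).im = (actZ γ z).im / ‖actZ γ z‖ ^ 2 := by
    rw [actZ_S_mul, Complex.neg_im, Complex.inv_im, Complex.normSq_eq_norm_sq, neg_div, neg_neg]
  rw [KkerTerm_eq_exp hz, KkerTerm_eq_exp hz, him, actZ_S_mul, norm_neg, norm_inv,
    Real.log_div (im_actZ_pos hz γ).ne' (pow_ne_zero 2 (norm_ne_zero_iff.2 hw)), Real.log_pow,
    Real.log_inv]
  push_cast
  ring_nf

lemma norm_KkerTerm (hz : 0 < z.im) (s s' : ℂ) (γ : SL2Z) :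
    ‖KkerTerm z s s' γ‖ =
      z.im ^ (s.re + s'.re) * (‖jZ γ z‖ ^ (-(2 * s'.re)) * ‖numZ γ z‖ ^ (-(2 * s.re))) := by
  have hj := norm_pos_iff.2 (jZ_ne_zero hz γ)
  have hr := norm_pos_iff.2 (numZ_ne_zero hz γ)
  rw [KkerTerm_eq_exp hz, Complex.norm_exp, im_actZ, actZ_eq_numZ_div_jZ, norm_div,
    Real.rpow_def_of_pos hz, Real.rpow_def_of_pos hj, Real.rpow_def_of_pos hr, ← Real.exp_add,
    ← Real.exp_add, Complex.normSq_eq_norm_sq, Real.log_div hz.ne' (pow_ne_zero 2 hj.ne'),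
    Real.log_div hr.ne' hj.ne', Real.log_pow]
  simp only [Complex.sub_re, Complex.add_re, Complex.mul_re, Complex.ofReal_re,
    Complex.ofReal_im, Complex.re_ofNat, Complex.im_ofNat]
  ring_nf

end KernelTerm

lemma norm_add_intCast_mul_rpow_neg_le {j r : ℂ} (hj : j ≠ 0) {b : ℝ} (hb : 0 ≤ b) (n : ℤ)
    (h : ‖j‖ ≤ ‖r + n * j‖) :
    ‖r + n * j‖ ^ (-b) ≤ 2 ^ b * ‖j‖ ^ (-b) * (1 + |n + (r / j).re|) ^ (-b) := by
  have hre : ‖j‖ * |n + (r / j).re| ≤ ‖r + n * j‖ := by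
    have : r + n * j = j * (n + r / j) := by field_simp; ring
    rw [this, norm_mul]
    gcongr
    simpa using Complex.abs_re_le_norm (n + r / j)
  have hpos : 0 < ‖j‖ * (1 + |n + (r / j).re|) / 2 := by positivity
  calc ‖r + n * j‖ ^ (-b) ≤ (‖j‖ * (1 + |n + (r / j).re|) / 2) ^ (-b) :=
        Real.rpow_le_rpow_of_nonpos hpos (by linarith) (by linarith)
    _ = 2 ^ b * ‖j‖ ^ (-b) * (1 + |n + (r / j).re|) ^ (-b) := by
        rw [Real.div_rpow (by positivity) zero_le_two,
          Real.mul_rpow (by positivity) (by positivity), Real.rpow_neg zero_le_two]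
        field_simp

lemma one_add_abs_intCast_add_rpow_neg_le {b : ℝ} (hb : 0 ≤ b) (n : ℤ) (x : ℝ) :
    (1 + |n + x|) ^ (-b) ≤ 1 / |((n + round x : ℤ) : ℝ) + 1 / 2| ^ b := by
  have hne : ((n + round x : ℤ) : ℝ) + 1 / 2 ≠ 0 := by
    intro h
    have : ((2 * (n + round x) + 1 : ℤ) : ℝ) = 0 := by push_cast at h ⊢; linarith
    have := Int.cast_eq_zero.1 this
    omega
  have hround := abs_le.1 (abs_sub_round x)
  have hle : |((n + round x : ℤ) : ℝ) + 1 / 2| ≤ 1 + |n + x| := by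
    calc |((n + round x : ℤ) : ℝ) + 1 / 2| = |(n + x) + (1 / 2 - (x - round x))| := by
          push_cast; ring_nf
      _ ≤ |n + x| + |1 / 2 - (x - round x)| := abs_add_le _ _
      _ ≤ 1 + |n + x| := by
          have : |1 / 2 - (x - round x)| ≤ 1 := abs_le.2 ⟨by linarith, by linarith⟩
          linarith
  rw [Real.rpow_neg (by positivity), one_div]
  exact inv_anti₀ (Real.rpow_pos_of_pos (abs_pos.2 hne) b)
    (Real.rpow_le_rpow (abs_nonneg _) hle hb)

namespace CP

/-- With `u c + v d = 1` from coprimality, the matrix `[[v, -u], [c, d]]`. -/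
def toSL2Z (p : CP) : SL2Z :=
  ⟨!![p.2.choose_spec.choose, -p.2.choose; p.1.1, p.1.2], by
    rw [Matrix.det_fin_two_of]
    linear_combination p.2.choose_spec.choose_spec⟩

lemma jZ_toSL2Z (p : CP) (z : ℂ) : jZ p.toSL2Z z = jP p.1 z := by
  simp [jZ, jP, toSL2Z]

lemma injective_T_zpow_mul_toSL2Z :
    Function.Injective fun x : CP × ℤ => T ^ x.2 * x.1.toSL2Z := by
  rintro ⟨p, n⟩ ⟨q, m⟩ h
  have hrow := congrArg (fun g : SL2Z => g 1) h
  simp only [T_pow_mul_apply_one] at hrow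
  have hpq : p = q := Subtype.ext <| Prod.ext
    (by simpa [toSL2Z] using congrFun hrow 0) (by simpa [toSL2Z] using congrFun hrow 1)
  subst hpq
  have h01 := congrArg (fun g : SL2Z => g 0 1) (mul_right_cancel h)
  simp only [coe_T_zpow] at h01
  simpa using h01

lemma surjective_T_zpow_mul_toSL2Z :
    Function.Surjective fun x : CP × ℤ => T ^ x.2 * x.1.toSL2Z := by
  intro γ
  set p : CP := ⟨(γ 1 0, γ 1 1), bottom_row_coprime γ⟩
  have huv : p.2.choose * γ 1 0 + p.2.choose_spec.choose * γ 1 1 = 1 :=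
    p.2.choose_spec.choose_spec
  have hdet : γ 0 0 * γ 1 1 - γ 0 1 * γ 1 0 = 1 := by
    have := γ.det_coe
    rwa [Matrix.det_fin_two] at this
  set n := γ 0 0 * p.2.choose + γ 0 1 * p.2.choose_spec.choose
  have h0 : (T ^ n * p.toSL2Z) 0 = γ 0 := by
    rw [T_zpow_mul_apply_zero]
    ext j
    fin_cases j
    · simp [toSL2Z, p, n]
      linear_combination γ 0 0 * huv - p.2.choose_spec.choose * hdet
    · simp [toSL2Z, p, n]
      linear_combination γ 0 1 * huv + p.2.choose * hdet
  have h1 : (T ^ n * p.toSL2Z) 1 = γ 1 := by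
    rw [T_pow_mul_apply_one]
    ext j
    fin_cases j <;> simp [toSL2Z, p]
  refine ⟨(p, n), ?_⟩
  ext i j
  fin_cases i
  exacts [congrFun h0 j, congrFun h1 j]

def prodIntEquiv : CP × ℤ ≃ SL2Z :=
  Equiv.ofBijective _ ⟨injective_T_zpow_mul_toSL2Z, surjective_T_zpow_mul_toSL2Z⟩

lemma prodIntEquiv_apply (x : CP × ℤ) : prodIntEquiv x = T ^ x.2 * x.1.toSL2Z := rfl

end CP

section Summability

variable {z : ℂ}

lemma summable_norm_jP_rpow_neg (hz : 0 < z.im) {k : ℝ} (hk : 2 < k) :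
    Summable fun p : CP => ‖jP p.1 z‖ ^ (-k) := by
  have hsum : Summable fun x : Fin 2 → ℤ => ‖(x 0 : ℂ) * z + x 1‖ ^ (-k) :=
    ((EisensteinSeries.summable_one_div_norm_rpow hk).mul_left _).of_nonneg_of_le
      (fun _ => by positivity)
      (EisensteinSeries.summand_bound ⟨z, hz⟩ (by linarith))
  have hinj : Function.Injective fun p : CP => ![p.1.1, p.1.2] := fun p q h =>
    Subtype.ext <| Prod.ext (by simpa using congrFun h 0) (by simpa using congrFun h 1)
  exact (hsum.comp_injective hinj).congr fun p => by simp [jP]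

lemma summable_ite_norm_jZ_le_norm_numZ (hz : 0 < z.im) {a b : ℝ} (hb : 1 < b)
    (hab : 2 < a + b) :
    Summable fun γ : SL2Z => if ‖jZ γ z‖ ≤ ‖numZ γ z‖ then
      ‖jZ γ z‖ ^ (-a) * ‖numZ γ z‖ ^ (-b) else 0 := by
  rw [← CP.prodIntEquiv.summable_iff]
  set x : CP → ℝ := fun p => (numZ p.toSL2Z z / jP p.1 z).re
  set g : ℤ → ℝ := fun m => 1 / |(m : ℝ) + 1 / 2| ^ b
  have hg : Summable g := (Real.summable_one_div_int_add_rpow _ _).2 hb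
  have hH : Summable fun q : CP × ℤ =>
      2 ^ b * (‖jP q.1.1 z‖ ^ (-(a + b)) * g (q.2 + round (x q.1))) := by
    -- the shear `(p, m) ↦ (p, m - round (x p))` turns this majorant into a product
    rw [← (Equiv.prodShear (Equiv.refl CP) fun p => Equiv.subRight (round (x p))).summable_iff]
    refine (((summable_norm_jP_rpow_neg hz hab).mul_of_nonneg hg (fun _ => by positivity)
      (fun _ => by positivity)).mul_left (2 ^ b)).congr fun q => ?_
    simp [Equiv.prodShear]
  refine hH.of_nonneg_of_le
    (fun _ => by dsimp only [Function.comp_apply]; split_ifs <;> positivity) fun ⟨p, n⟩ => ?_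
  have hj := jZ_ne_zero hz p.toSL2Z
  simp only [Function.comp_apply, CP.prodIntEquiv_apply, jZ_T_zpow_mul, numZ_T_zpow_mul] at hj ⊢
  rw [CP.jZ_toSL2Z] at hj ⊢
  split_ifs with h
  · calc ‖jP p.1 z‖ ^ (-a) * ‖numZ p.toSL2Z z + n * jP p.1 z‖ ^ (-b)
        ≤ ‖jP p.1 z‖ ^ (-a) * (2 ^ b * ‖jP p.1 z‖ ^ (-b) * (1 + |n + x p|) ^ (-b)) := by
          gcongr
          exact norm_add_intCast_mul_rpow_neg_le hj (by linarith) n h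
      _ ≤ ‖jP p.1 z‖ ^ (-a) * (2 ^ b * ‖jP p.1 z‖ ^ (-b) * g (n + round (x p))) := by
          gcongr
          exact one_add_abs_intCast_add_rpow_neg_le (by linarith) n (x p)
      _ = 2 ^ b * (‖jP p.1 z‖ ^ (-(a + b)) * g (n + round (x p))) := by
          rw [neg_add, Real.rpow_add (norm_pos_iff.2 hj)]
          ring
  · positivity

/-- Since `S` exchanges `cz + d` and `az + b` up to sign, the region `|az + b| < |cz + d|` is
covered by `summable_ite_norm_jZ_le_norm_numZ` with the exponents swapped. -/
lemma summable_norm_jZ_rpow_neg_mul_norm_numZ_rpow_neg (hz : 0 < z.im) {a b : ℝ} (ha : 1 < a)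
    (hb : 1 < b) :
    Summable fun γ : SL2Z => ‖jZ γ z‖ ^ (-a) * ‖numZ γ z‖ ^ (-b) := by
  have h₁ := summable_ite_norm_jZ_le_norm_numZ hz hb (by linarith : 2 < a + b)
  have h₂ := (summable_ite_norm_jZ_le_norm_numZ hz ha (by linarith : 2 < b + a)).comp_injective
    (mul_right_injective S)
  refine (h₁.add h₂).of_nonneg_of_le (fun _ => by positivity) fun γ => ?_
  simp only [Function.comp_apply, jZ_S_mul, numZ_S_mul, norm_neg]
  have hpos : 0 ≤ ‖jZ γ z‖ ^ (-a) * ‖numZ γ z‖ ^ (-b) := by positivity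
  split_ifs with h h' h' <;> linarith [mul_comm (‖jZ γ z‖ ^ (-a)) (‖numZ γ z‖ ^ (-b))]

end Summability

/-- the kernel `K(z;s,s') = (1/2) Σ_{γ∈SL(2,ℤ)} Im(γz)^{s+s'}/|γz|^{2s}`
converges absolutely for `Re s, Re s' > 1/2` and is symmetric in `s, s'`. -/
theorem statement16 (z : ℂ) (hz : 0 < z.im) (s s' : ℂ)
    (hs : 1 / 2 < s.re) (hs' : 1 / 2 < s'.re) :
    (Summable fun γ : SL2Z => ‖KkerTerm z s s' γ‖) ∧ Kker z s s' = Kker z s' s := by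
  refine ⟨?_, ?_⟩
  · refine ((summable_norm_jZ_rpow_neg_mul_norm_numZ_rpow_neg hz (a := 2 * s'.re)
      (b := 2 * s.re) (by linarith) (by linarith)).mul_left (z.im ^ (s.re + s'.re))).congr
      fun γ => (norm_KkerTerm hz s s' γ).symm
  · rw [Kker, Kker, ← (Equiv.mulLeft S).tsum_eq]
    simp only [Equiv.coe_mulLeft, KkerTerm_S_mul hz]
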